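/- Recursion relations for the Laurent coefficients at infinity: define G₋₂ = (2,−1,−1), G₋₁ = (−2(z₁+z₂), 2z₂, 2z₁), G₀ = (−z₁²+4z₁z₂−z₂², z₁(z₁−2z₂), z₂(z₂−2z₁)), G₁ = (0, 2(z₁−z₂)³, −2(z₁−z₂)³), G₂ = ((z₁−z₂)⁴, −(1/2)(z₁−z₂)⁴, −(1/2)(z₁−z₂)⁴), G₃ = ((3/5)(z₁−z₂)⁴(z₁+z₂), (1/5)(z₁−z₂)³(6z₁²−25z₁z₂+9z₂²), −(1/5)(z₁−z₂)³(9z₁²−25z₁z₂+6z₂²)), G₄ = ((3/10)(z₁−z₂)⁴(3z₁²−4z₁z₂+3z₂²), (1/10)(z₁−z₂)³(15z₁³−29z₁²z₂−50z₁z₂²+24z₂³), −(1/10)(z₁−z₂)³(24z₁³−50z₁²z₂−29z₁z₂²+15z₂³)), and set G_k = 0 for k < −2. Then for every integer q with −3 ≤ q ≤ 3, the identity ((q+1)·I₃ − 2T)·G_{q+1} = 2·∑_{r ≥ 0, r+s = q} T_r·G_s holds, where the sum is over integers r ≥ 0 and s ≥ −2 with r + s = q. -/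

import Mathlib

open Matrix

noncomputable def P1 : Matrix (Fin 3) (Fin 3) ℂ := !![0,1,0; 1,0,0; 0,0,1]
noncomputable def P2 : Matrix (Fin 3) (Fin 3) ℂ := !![0,0,1; 0,1,0; 1,0,0]
noncomputable def T : Matrix (Fin 3) (Fin 3) ℂ := P1 + P2

/-- T_r = z₁^{r+1}·P₁ + z₂^{r+1}·P₂. -/
noncomputable def Tr (z₁ z₂ : ℂ) (r : ℕ) : Matrix (Fin 3) (Fin 3) ℂ :=
  z₁^(r+1) • P1 + z₂^(r+1) • P2

/-- The Laurent coefficients G_k at infinity (zero for k < −2). -/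
noncomputable def G (z₁ z₂ : ℂ) (k : ℤ) : Fin 3 → ℂ :=
  if k = -2 then ![2, -1, -1]
  else if k = -1 then ![-2*(z₁ + z₂), 2*z₂, 2*z₁]
  else if k = 0 then ![-z₁^2 + 4*z₁*z₂ - z₂^2, z₁*(z₁ - 2*z₂), z₂*(z₂ - 2*z₁)]
  else if k = 1 then ![0, 2*(z₁ - z₂)^3, -2*(z₁ - z₂)^3]
  else if k = 2 then ![(z₁ - z₂)^4, -(1/2)*(z₁ - z₂)^4, -(1/2)*(z₁ - z₂)^4]
  else if k = 3 then
    ![(3/5)*(z₁ - z₂)^4*(z₁ + z₂),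
      (1/5)*(z₁ - z₂)^3*(6*z₁^2 - 25*z₁*z₂ + 9*z₂^2),
      -(1/5)*(z₁ - z₂)^3*(9*z₁^2 - 25*z₁*z₂ + 6*z₂^2)]
  else if k = 4 then
    ![(3/10)*(z₁ - z₂)^4*(3*z₁^2 - 4*z₁*z₂ + 3*z₂^2),
      (1/10)*(z₁ - z₂)^3*(15*z₁^3 - 29*z₁^2*z₂ - 50*z₁*z₂^2 + 24*z₂^3),
      -(1/10)*(z₁ - z₂)^3*(24*z₁^3 - 50*z₁^2*z₂ - 29*z₁*z₂^2 + 15*z₂^3)]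
  else 0

section Coordinates

variable (v : Fin 3 → ℂ)

lemma P1_mulVec : P1 *ᵥ v = ![v 1, v 0, v 2] := by
  ext i; fin_cases i <;> simp [P1, mulVec, dotProduct, Fin.sum_univ_succ]

lemma P2_mulVec : P2 *ᵥ v = ![v 2, v 1, v 0] := by
  ext i; fin_cases i <;> simp [P2, mulVec, dotProduct, Fin.sum_univ_succ]

lemma Tr_mulVec (z₁ z₂ : ℂ) (r : ℕ) :
    Tr z₁ z₂ r *ᵥ v =
      ![z₁ ^ (r + 1) * v 1 + z₂ ^ (r + 1) * v 2,
        z₁ ^ (r + 1) * v 0 + z₂ ^ (r + 1) * v 1,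
        z₁ ^ (r + 1) * v 2 + z₂ ^ (r + 1) * v 0] := by
  ext i; fin_cases i <;> simp [Tr, add_mulVec, smul_mulVec, P1_mulVec, P2_mulVec]

lemma smul_one_sub_two_smul_T_mulVec (c : ℂ) :
    (c • (1 : Matrix (Fin 3) (Fin 3) ℂ) - (2 : ℂ) • T) *ᵥ v =
      ![c * v 0 - 2 * (v 1 + v 2), c * v 1 - 2 * (v 0 + v 1), c * v 2 - 2 * (v 2 + v 0)] := by
  ext i; fin_cases i <;> simp [T, sub_mulVec, add_mulVec, smul_mulVec, P1_mulVec, P2_mulVec] <;> ring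

end Coordinates

theorem recursion_relations_general (z₁ z₂ : ℂ) :
    ∀ q : ℤ, -3 ≤ q → q ≤ 3 →
      (((q + 1 : ℤ) : ℂ) • (1 : Matrix (Fin 3) (Fin 3) ℂ) - (2 : ℂ) • T) *ᵥ
          G z₁ z₂ (q + 1) =
        (2 : ℂ) • ∑ r ∈ Finset.range (q + 3).toNat,
          Tr z₁ z₂ r *ᵥ G z₁ z₂ (q - r) := by
  intro q hq₁ hq₂
  simp only [smul_one_sub_two_smul_T_mulVec, Tr_mulVec]
  -- Every index q + 1 and q - r (r ≤ q + 2) lies in [-2, 4], so each case is a polynomial identity.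
  interval_cases q <;>
  · ext i
    fin_cases i <;> simp [G, Finset.sum_range_succ] <;> ring

theorem recursion_relations (z₁ z₂ : ℂ) (hz : z₁ ≠ z₂) :
    ∀ q : ℤ, -3 ≤ q → q ≤ 3 →
      (((q + 1 : ℤ) : ℂ) • (1 : Matrix (Fin 3) (Fin 3) ℂ) - (2 : ℂ) • T) *ᵥ
          G z₁ z₂ (q + 1) =
        (2 : ℂ) • ∑ r ∈ Finset.range (q + 3).toNat,
          Tr z₁ z₂ r *ᵥ G z₁ z₂ (q - r) :=
  recursion_relations_general z₁ z₂
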